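/- Let δ ∈ [0,1), let x_j, x₁,…,x_N ∈ ℝ^D with ‖xᵢ‖₂ = 1 for all i, let c = (c₁,…,c_N) ∈ ℝ^N, and let ξ₁,…,ξ_N be i.i.d. random variables each taking the value 1/(1−δ) with probability 1−δ and the value 0 with probability δ. Then, with λ = δ/(1−δ), E‖x_j − Σᵢ ξᵢ cᵢ xᵢ‖₂² = ‖x_j − Σᵢ cᵢ xᵢ‖₂² + λ‖c‖₂². Consequently, a vector c minimizes c ↦ E‖x_j − Σᵢ ξᵢ cᵢ xᵢ‖₂² over any fixed constraint set S ⊆ ℝ^N if and only if it minimizes c ↦ ‖x_j − Σᵢ cᵢ xᵢ‖₂² + λ‖c‖₂² over S. -/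

import Mathlib

/-!
The squared residual `‖y - ∑ i, ξᵢ • vᵢ‖²` is a quadratic polynomial in the random coefficients
`ξᵢ`, so its expectation only sees their first and second moments: it is
`‖y - ∑ i, E[ξᵢ] • vᵢ‖² + ∑ i j, cov(ξᵢ, ξⱼ) ⟪vᵢ, vⱼ⟫`. Independent dropout masks have mean `1`,
are uncorrelated, and have variance `δ / (1 - δ)`, so for `vᵢ = cᵢ • xᵢ` with `‖xᵢ‖ = 1` the
expectation is `‖y - ∑ i, cᵢ • xᵢ‖² + λ ‖c‖²`. Equal objectives have equal minimizers.
-/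

open MeasureTheory ProbabilityTheory Finset
open scoped InnerProductSpace

section InnerProduct
variable {ι E : Type*} [Fintype ι] [NormedAddCommGroup E] [InnerProductSpace ℝ E]

theorem norm_sub_sum_smul_sq (y : E) (t : ι → ℝ) (v : ι → E) :
    ‖y - ∑ i, t i • v i‖ ^ 2
      = ‖y‖ ^ 2 - 2 * ∑ i, t i * ⟪y, v i⟫_ℝ + ∑ i, ∑ j, t i * t j * ⟪v i, v j⟫_ℝ := by
  rw [norm_sub_sq_real, ← real_inner_self_eq_norm_sq (∑ i, t i • v i)]
  simp only [inner_sum, sum_inner, real_inner_smul_left, real_inner_smul_right, mul_sum]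
  congr 2
  ext i
  exact sum_congr rfl fun j _ => by rw [real_inner_comm]; ring

variable {Ω : Type*} [MeasurableSpace Ω] {μ : Measure Ω} [IsProbabilityMeasure μ]
  {ξ : ι → Ω → ℝ}

theorem integral_norm_sub_sum_smul_sq (hξ : ∀ i, MemLp (ξ i) 2 μ) (y : E) (v : ι → E) :
    ∫ ω, ‖y - ∑ i, ξ i ω • v i‖ ^ 2 ∂μ
      = ‖y - ∑ i, μ[ξ i] • v i‖ ^ 2 + ∑ i, ∑ j, cov[ξ i, ξ j; μ] * ⟪v i, v j⟫_ℝ := by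
  have hint : ∀ i, Integrable (ξ i) μ := fun i => (hξ i).integrable one_le_two
  have hmul : ∀ i j, Integrable (fun ω => ξ i ω * ξ j ω) μ :=
    fun i j => (hξ i).integrable_mul (hξ j)
  simp_rw [norm_sub_sum_smul_sq]
  rw [integral_add, integral_sub, integral_const, integral_const_mul, integral_finsetSum,
    integral_finsetSum]
  · simp_rw [integral_finsetSum _ fun j _ => (hmul _ j).mul_const _, integral_mul_const]
    have hsecond : ∀ i j, ∫ ω, ξ i ω * ξ j ω ∂μ = μ[ξ i] * μ[ξ j] + cov[ξ i, ξ j; μ] := by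
      intro i j
      rw [covariance_eq_sub (hξ i) (hξ j)]
      simp only [Pi.mul_apply, add_sub_cancel]
    simp only [hsecond, add_mul, sum_add_distrib, probReal_univ, one_smul]
    ring
  all_goals fun_prop

theorem integral_norm_sub_sum_smul_sq_of_uncorrelated (hξ : ∀ i, MemLp (ξ i) 2 μ)
    (hcov : Pairwise fun i j => cov[ξ i, ξ j; μ] = 0) (y : E) (v : ι → E) :
    ∫ ω, ‖y - ∑ i, ξ i ω • v i‖ ^ 2 ∂μ
      = ‖y - ∑ i, μ[ξ i] • v i‖ ^ 2 + ∑ i, Var[ξ i; μ] * ‖v i‖ ^ 2 := by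
  rw [integral_norm_sub_sum_smul_sq hξ]
  congr 1
  refine sum_congr rfl fun i _ => ?_
  rw [sum_eq_single i (fun j _ hji => by rw [hcov hji.symm, zero_mul]) (by simp),
    covariance_self (hξ i).aemeasurable, real_inner_self_eq_norm_sq]

end InnerProduct

section
variable {Ω : Type*} [MeasurableSpace Ω] {μ : Measure Ω} [IsProbabilityMeasure μ]

theorem ae_eq_or_eq_of_measure_add_eq_one {X : Ω → ℝ} (hX : Measurable X) {a b : ℝ}
    (hab : a ≠ b) (h : μ {ω | X ω = a} + μ {ω | X ω = b} = 1) :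
    ∀ᵐ ω ∂μ, X ω = a ∨ X ω = b := by
  have hdisj : Disjoint {ω | X ω = a} {ω | X ω = b} :=
    Set.disjoint_left.2 fun ω ha hb => hab (ha.symm.trans hb)
  rw [ae_iff_measure_eq, measure_univ, Set.ofPred_or,
    measure_union hdisj (hX (measurableSet_singleton b)), h]
  exact ((hX (measurableSet_singleton a)).union (hX (measurableSet_singleton b))).nullMeasurableSet

theorem variance_indicator_const {s : Set Ω} (hs : MeasurableSet s) (a : ℝ) :
    Var[s.indicator fun _ => a; μ] = a ^ 2 * μ.real s * (1 - μ.real s) := by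
  have hsq : (s.indicator fun _ => a) ^ 2 = s.indicator fun _ => a ^ 2 := by
    ext ω
    by_cases hω : ω ∈ s <;> simp [hω]
  rw [variance_eq_sub (memLp_indicator_const 2 hs a (Or.inr (measure_ne_top μ s))), hsq,
    integral_indicator_const _ hs, integral_indicator_const _ hs, smul_eq_mul, smul_eq_mul]
  ring

end

section Dropout
variable {Ω : Type*} [MeasurableSpace Ω] {μ : Measure Ω}

structure IsDropout (X : Ω → ℝ) (δ : ℝ) (μ : Measure Ω) : Prop where
  rate_nonneg : 0 ≤ δ
  rate_lt_one : δ < 1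
  measurable : Measurable X
  measure_eq_inv : μ {ω | X ω = 1 / (1 - δ)} = ENNReal.ofReal (1 - δ)
  measure_eq_zero : μ {ω | X ω = 0} = ENNReal.ofReal δ

namespace IsDropout
variable {X : Ω → ℝ} {δ : ℝ}

theorem measurableSet_eq_inv (h : IsDropout X δ μ) : MeasurableSet {ω | X ω = 1 / (1 - δ)} :=
  h.measurable (measurableSet_singleton _)

theorem measureReal_eq_inv (h : IsDropout X δ μ) : μ.real {ω | X ω = 1 / (1 - δ)} = 1 - δ := by
  rw [measureReal_def, h.measure_eq_inv, ENNReal.toReal_ofReal (by linarith [h.rate_lt_one])]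

variable [IsProbabilityMeasure μ]

theorem ae_eq_indicator (h : IsDropout X δ μ) :
    X =ᵐ[μ] {ω | X ω = 1 / (1 - δ)}.indicator fun _ => 1 / (1 - δ) := by
  have hinv : 1 / (1 - δ) ≠ 0 := one_div_ne_zero (by linarith [h.rate_lt_one])
  have hsum : μ {ω | X ω = 1 / (1 - δ)} + μ {ω | X ω = 0} = 1 := by
    rw [h.measure_eq_inv, h.measure_eq_zero,
      ← ENNReal.ofReal_add (by linarith [h.rate_lt_one]) h.rate_nonneg, sub_add_cancel,
      ENNReal.ofReal_one]
  filter_upwards [ae_eq_or_eq_of_measure_add_eq_one h.measurable hinv hsum] with ω hω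
  rcases hω with hω | hω
  · simp [hω]
  · rw [hω, Set.indicator_of_notMem fun hmem => hinv (hmem.symm.trans hω)]

theorem memLp (h : IsDropout X δ μ) (p : ENNReal) : MemLp X p μ :=
  (memLp_indicator_const p h.measurableSet_eq_inv _ (Or.inr (measure_ne_top μ _))).ae_eq
    h.ae_eq_indicator.symm

theorem integral_eq_one (h : IsDropout X δ μ) : μ[X] = 1 := by
  have hδ : 1 - δ ≠ 0 := by linarith [h.rate_lt_one]
  rw [integral_congr_ae h.ae_eq_indicator, integral_indicator_const _ h.measurableSet_eq_inv,
    h.measureReal_eq_inv, smul_eq_mul]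
  field_simp

theorem variance_eq (h : IsDropout X δ μ) : Var[X; μ] = δ / (1 - δ) := by
  have hδ : 1 - δ ≠ 0 := by linarith [h.rate_lt_one]
  rw [variance_congr h.ae_eq_indicator, variance_indicator_const h.measurableSet_eq_inv,
    h.measureReal_eq_inv]
  field_simp
  ring

end IsDropout

end Dropout

/-- With unit-norm dictionary columns, dropout in the self-expressive model is
equivalent to a squared `ℓ₂` regularizer with `λ = δ/(1-δ)`: the expected dropout
objective equals `‖x_j − ∑ i, c i • x i‖² + λ‖c‖²`, and hence minimizing the expected
dropout objective over any constraint set `S` is equivalent to minimizing the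
`ℓ₂`-regularized objective over `S`. -/
theorem dropout_equiv_ridge {Ω : Type*} [MeasurableSpace Ω] (μ : Measure Ω)
    [IsProbabilityMeasure μ] (δ : ℝ) (hδ0 : 0 ≤ δ) (hδ1 : δ < 1) (D N : ℕ)
    (xj : EuclideanSpace ℝ (Fin D))
    (x : Fin N → EuclideanSpace ℝ (Fin D)) (hx : ∀ i, ‖x i‖ = 1)
    (ξ : Fin N → Ω → ℝ) (hm : ∀ i, Measurable (ξ i))
    (hdist : ∀ i, μ {ω | ξ i ω = 1 / (1 - δ)} = ENNReal.ofReal (1 - δ) ∧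
      μ {ω | ξ i ω = 0} = ENNReal.ofReal δ)
    (hind : ProbabilityTheory.iIndepFun ξ μ)
    (lam : ℝ) (hlam : lam = δ / (1 - δ)) :
    (∀ c : EuclideanSpace ℝ (Fin N),
      (∫ ω, ‖xj - ∑ i, (ξ i ω * c i) • x i‖ ^ 2 ∂μ)
        = ‖xj - ∑ i, c i • x i‖ ^ 2 + lam * ‖c‖ ^ 2) ∧
    (∀ (S : Set (EuclideanSpace ℝ (Fin N))) (c : EuclideanSpace ℝ (Fin N)), c ∈ S →
      ((∀ c' ∈ S,
          (∫ ω, ‖xj - ∑ i, (ξ i ω * c i) • x i‖ ^ 2 ∂μ)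
            ≤ (∫ ω, ‖xj - ∑ i, (ξ i ω * c' i) • x i‖ ^ 2 ∂μ)) ↔
       (∀ c' ∈ S,
          ‖xj - ∑ i, c i • x i‖ ^ 2 + lam * ‖c‖ ^ 2
            ≤ ‖xj - ∑ i, c' i • x i‖ ^ 2 + lam * ‖c'‖ ^ 2))) := by
  have hξ : ∀ i, IsDropout (ξ i) δ μ := fun i => ⟨hδ0, hδ1, hm i, (hdist i).1, (hdist i).2⟩
  have hL2 : ∀ i, MemLp (ξ i) 2 μ := fun i => (hξ i).memLp 2
  have hcov : Pairwise fun i j => cov[ξ i, ξ j; μ] = 0 :=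
    fun i j hij => (hind.indepFun hij).covariance_eq_zero (hL2 i) (hL2 j)
  have hobj : ∀ c : EuclideanSpace ℝ (Fin N),
      ∫ ω, ‖xj - ∑ i, (ξ i ω * c i) • x i‖ ^ 2 ∂μ = ‖xj - ∑ i, c i • x i‖ ^ 2 + lam * ‖c‖ ^ 2 := by
    intro c
    simp_rw [mul_smul]
    rw [integral_norm_sub_sum_smul_sq_of_uncorrelated hL2 hcov, EuclideanSpace.norm_sq_eq c,
      mul_sum]
    simp [(hξ _).integral_eq_one, (hξ _).variance_eq, norm_smul, hx, hlam]
  exact ⟨hobj, fun S c _ => by simp only [hobj]⟩
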